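/- arXiv:2006.08814 — 3 statements merged into one kernel-verified Lean document; each statement's English description precedes it below -/
import Mathlib

section
/- Let A be a real m×n matrix, b ∈ ℝ^m, c ∈ ℝ^n, and let ρ_p, ρ_d, ρ_g > 0. Suppose (x*, y*, s*, τ*, κ*) is feasible for the homogeneous self-dual embedding (HSD) and complementary, i.e. (x*)ᵀs* + τ*κ* = 0. Take the reference point (x̄, ȳ, τ̄) = (x*, y*, τ*) in the definition of the regularized embedding (rHSD). Then (x*, y*, s*, τ*, κ*) is feasible for (rHSD) with objective value Z(x*, y*, τ*) = 0, every (rHSD)-feasible point (x, y, s, τ, κ) satisfies Z(x, y, τ) ≥ 0, and any (rHSD)-feasible point (x, y, s, τ, κ) with Z(x, y, τ) = 0 satisfies (x, y, τ) = (x*, y*, τ*). In other words, (x*, y*, τ*) is the unique optimal solution of (rHSD). -/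
open Matrix

/-- Feasibility for the homogeneous self-dual embedding (HSD). -/
def hsdFeasible {m n : ℕ} (A : Matrix (Fin m) (Fin n) ℝ) (b : Fin m → ℝ) (c : Fin n → ℝ)
    (x : Fin n → ℝ) (y : Fin m → ℝ) (s : Fin n → ℝ) (τ κ : ℝ) : Prop :=
  s = τ • c - Aᵀ.mulVec y ∧ A.mulVec x = τ • b ∧ κ = b ⬝ᵥ y - c ⬝ᵥ x ∧
  (∀ j, 0 ≤ x j) ∧ (∀ j, 0 ≤ s j) ∧ 0 ≤ τ ∧ 0 ≤ κ

/-- Feasibility for the regularized embedding (rHSD) with reference point (x̄, ȳ, τ̄). -/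
def rhsdFeasible {m n : ℕ} (A : Matrix (Fin m) (Fin n) ℝ) (b : Fin m → ℝ) (c : Fin n → ℝ)
    (ρp ρd ρg : ℝ) (xb : Fin n → ℝ) (yb : Fin m → ℝ) (τb : ℝ)
    (x : Fin n → ℝ) (y : Fin m → ℝ) (s : Fin n → ℝ) (τ κ : ℝ) : Prop :=
  s = τ • c - Aᵀ.mulVec y + ρp • (x - xb) ∧
  A.mulVec x - τ • b + ρd • (y - yb) = 0 ∧
  κ = b ⬝ᵥ y - c ⬝ᵥ x + ρg * (τ - τb) ∧
  (∀ j, 0 ≤ x j) ∧ (∀ j, 0 ≤ s j) ∧ 0 ≤ τ ∧ 0 ≤ κ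

/-- Objective of the regularized embedding (rHSD). -/
def rhsdObj {m n : ℕ} (ρp ρd ρg : ℝ) (xb : Fin n → ℝ) (yb : Fin m → ℝ) (τb : ℝ)
    (x : Fin n → ℝ) (y : Fin m → ℝ) (τ : ℝ) : ℝ :=
  ρp * ((x - xb) ⬝ᵥ x) + ρd * ((y - yb) ⬝ᵥ y) + ρg * (τ - τb) * τ

/-!
By skew-symmetry of the HSD operator, every rHSD-feasible point satisfies
`Z(x, y, τ) = ρp‖x - x*‖² + ρd‖y - y*‖² + ρg(τ - τ*)² + (x*ᵀs + xᵀs* + τκ* + τ*κ)`.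
The bracket is nonnegative by the sign constraints, so `Z ≥ 0`, and `Z = 0` forces the weighted
distance to the reference point to vanish.
-/

section WeightedSqDist

variable {ι ι' : Type*} [Fintype ι] [Fintype ι'] {ρp ρd ρg : ℝ}

def weightedSqDist (ρp ρd ρg : ℝ) (xb : ι → ℝ) (yb : ι' → ℝ) (τb : ℝ)
    (x : ι → ℝ) (y : ι' → ℝ) (τ : ℝ) : ℝ :=
  ρp * ((x - xb) ⬝ᵥ (x - xb)) + ρd * ((y - yb) ⬝ᵥ (y - yb)) + ρg * (τ - τb) ^ 2

theorem dotProduct_self_nonneg (v : ι → ℝ) : 0 ≤ v ⬝ᵥ v :=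
  Finset.sum_nonneg fun i _ => mul_self_nonneg (v i)

theorem weightedSqDist_nonneg (hρp : 0 ≤ ρp) (hρd : 0 ≤ ρd) (hρg : 0 ≤ ρg)
    (xb : ι → ℝ) (yb : ι' → ℝ) (τb : ℝ) (x : ι → ℝ) (y : ι' → ℝ) (τ : ℝ) :
    0 ≤ weightedSqDist ρp ρd ρg xb yb τb x y τ := by
  unfold weightedSqDist
  have := dotProduct_self_nonneg (x - xb)
  have := dotProduct_self_nonneg (y - yb)
  positivity

theorem eq_of_weightedSqDist_nonpos (hρp : 0 < ρp) (hρd : 0 < ρd) (hρg : 0 < ρg)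
    {xb x : ι → ℝ} {yb y : ι' → ℝ} {τb τ : ℝ}
    (h : weightedSqDist ρp ρd ρg xb yb τb x y τ ≤ 0) : x = xb ∧ y = yb ∧ τ = τb := by
  unfold weightedSqDist at h
  have hx := dotProduct_self_nonneg (x - xb)
  have hy := dotProduct_self_nonneg (y - yb)
  have hτ := sq_nonneg (τ - τb)
  refine ⟨sub_eq_zero.mp (dotProduct_self_eq_zero.mp ?_),
    sub_eq_zero.mp (dotProduct_self_eq_zero.mp ?_),
    sub_eq_zero.mp ((pow_eq_zero_iff two_ne_zero).mp ?_)⟩ <;> nlinarith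

end WeightedSqDist

section Embedding

variable {m n : ℕ} {A : Matrix (Fin m) (Fin n) ℝ} {b : Fin m → ℝ} {c : Fin n → ℝ}
  {ρp ρd ρg : ℝ} {xs : Fin n → ℝ} {ys : Fin m → ℝ} {ss : Fin n → ℝ} {τs κs : ℝ}
  {x : Fin n → ℝ} {y : Fin m → ℝ} {s : Fin n → ℝ} {τ κ : ℝ}

theorem hsdFeasible.rhsdFeasible_self (h : hsdFeasible A b c xs ys ss τs κs) :
    rhsdFeasible A b c ρp ρd ρg xs ys τs xs ys ss τs κs := by
  obtain ⟨hs, hA, hκ, hx, hs', hτ, hκ'⟩ := h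
  exact ⟨by simp [hs], by simp [hA], by simp [hκ], hx, hs', hτ, hκ'⟩

theorem rhsdObj_self : rhsdObj ρp ρd ρg xs ys τs xs ys τs = 0 := by
  simp [rhsdObj]

theorem rhsdObj_eq_weightedSqDist_add
    (hss : ss = τs • c - Aᵀ *ᵥ ys) (hAs : A *ᵥ xs = τs • b) (hκs : κs = b ⬝ᵥ ys - c ⬝ᵥ xs)
    (hs : s = τ • c - Aᵀ *ᵥ y + ρp • (x - xs)) (hA : A *ᵥ x - τ • b + ρd • (y - ys) = 0)
    (hκ : κ = b ⬝ᵥ y - c ⬝ᵥ x + ρg * (τ - τs)) :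
    rhsdObj ρp ρd ρg xs ys τs x y τ =
      weightedSqDist ρp ρd ρg xs ys τs x y τ + (xs ⬝ᵥ s + x ⬝ᵥ ss + τ * κs + τs * κ) := by
  have hAx : A *ᵥ x = τ • b - ρd • (y - ys) := by linear_combination hA
  have hxs_s : xs ⬝ᵥ s = τ * (c ⬝ᵥ xs) - τs * (b ⬝ᵥ y) + ρp * ((x - xs) ⬝ᵥ xs) := by
    rw [hs, dotProduct_add, dotProduct_sub, dotProduct_mulVec, vecMul_transpose, hAs]
    simp only [smul_dotProduct, smul_eq_mul, dotProduct_comm xs]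
  have hx_ss : x ⬝ᵥ ss = τs * (c ⬝ᵥ x) - τ * (b ⬝ᵥ ys) + ρd * ((y - ys) ⬝ᵥ ys) := by
    rw [hss, dotProduct_sub, dotProduct_mulVec, vecMul_transpose, hAx]
    simp only [smul_dotProduct, sub_dotProduct, smul_eq_mul, dotProduct_comm x]
    ring
  rw [rhsdObj, weightedSqDist, hxs_s, hx_ss, hκ, hκs]
  simp only [dotProduct_sub, sub_dotProduct]
  ring

theorem weightedSqDist_le_rhsdObj (hfeas : hsdFeasible A b c xs ys ss τs κs)
    (h : rhsdFeasible A b c ρp ρd ρg xs ys τs x y s τ κ) :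
    weightedSqDist ρp ρd ρg xs ys τs x y τ ≤ rhsdObj ρp ρd ρg xs ys τs x y τ := by
  obtain ⟨hss, hAs, hκs, hxs, hss', hτs, hκs'⟩ := hfeas
  obtain ⟨hs, hA, hκ, hx, hs', hτ, hκ'⟩ := h
  rw [rhsdObj_eq_weightedSqDist_add hss hAs hκs hs hA hκ, le_add_iff_nonneg_right]
  have := dotProduct_nonneg_of_nonneg (w := s) hxs hs'
  have := dotProduct_nonneg_of_nonneg (w := ss) hx hss'
  positivity

end Embedding

theorem exact_regularization_general {m n : ℕ} (A : Matrix (Fin m) (Fin n) ℝ)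
    (b : Fin m → ℝ) (c : Fin n → ℝ) (ρp ρd ρg : ℝ)
    (hρp : 0 < ρp) (hρd : 0 < ρd) (hρg : 0 < ρg)
    (xs : Fin n → ℝ) (ys : Fin m → ℝ) (ss : Fin n → ℝ) (τs κs : ℝ)
    (hfeas : hsdFeasible A b c xs ys ss τs κs) :
    (rhsdFeasible A b c ρp ρd ρg xs ys τs xs ys ss τs κs ∧
      rhsdObj ρp ρd ρg xs ys τs xs ys τs = 0) ∧
    (∀ x y s τ κ, rhsdFeasible A b c ρp ρd ρg xs ys τs x y s τ κ →
      0 ≤ rhsdObj ρp ρd ρg xs ys τs x y τ) ∧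
    (∀ x y s τ κ, rhsdFeasible A b c ρp ρd ρg xs ys τs x y s τ κ →
      rhsdObj ρp ρd ρg xs ys τs x y τ = 0 →
      x = xs ∧ y = ys ∧ τ = τs) := by
  refine ⟨⟨hfeas.rhsdFeasible_self, rhsdObj_self⟩, fun x y s τ κ h => ?_,
    fun x y s τ κ h hZ => ?_⟩
  · exact (weightedSqDist_nonneg hρp.le hρd.le hρg.le _ _ _ _ _ _).trans
      (weightedSqDist_le_rhsdObj hfeas h)
  · exact eq_of_weightedSqDist_nonpos hρp hρd hρg (hZ ▸ weightedSqDist_le_rhsdObj hfeas h)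

/-- Exactness of the regularization: a complementary (HSD)-feasible point, taken as
reference point, is the unique optimal solution of (rHSD). -/
theorem exact_regularization {m n : ℕ} (A : Matrix (Fin m) (Fin n) ℝ)
    (b : Fin m → ℝ) (c : Fin n → ℝ) (ρp ρd ρg : ℝ)
    (hρp : 0 < ρp) (hρd : 0 < ρd) (hρg : 0 < ρg)
    (xs : Fin n → ℝ) (ys : Fin m → ℝ) (ss : Fin n → ℝ) (τs κs : ℝ)
    (hfeas : hsdFeasible A b c xs ys ss τs κs)
    (hcomp : xs ⬝ᵥ ss + τs * κs = 0) :
    (rhsdFeasible A b c ρp ρd ρg xs ys τs xs ys ss τs κs ∧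
      rhsdObj ρp ρd ρg xs ys τs xs ys τs = 0) ∧
    (∀ x y s τ κ, rhsdFeasible A b c ρp ρd ρg xs ys τs x y s τ κ →
      0 ≤ rhsdObj ρp ρd ρg xs ys τs x y τ) ∧
    (∀ x y s τ κ, rhsdFeasible A b c ρp ρd ρg xs ys τs x y s τ κ →
      rhsdObj ρp ρd ρg xs ys τs x y τ = 0 →
      x = xs ∧ y = ys ∧ τ = τs) :=
  exact_regularization_general A b c ρp ρd ρg hρp hρd hρg xs ys ss τs κs hfeas
end

section
/- Let A be a real m×n matrix, b ∈ ℝ^m, c ∈ ℝ^n, ρ_p, ρ_d, ρ_g > 0, and x̄ ∈ ℝ^n, ȳ ∈ ℝ^m, τ̄ ∈ ℝ. If (x, y, s, τ, κ) is feasible for the regularized embedding (rHSD), then its objective value satisfies Z(x, y, τ) = ρ_p(x − x̄)ᵀx + ρ_d(y − ȳ)ᵀy + ρ_g(τ − τ̄)τ = xᵀs + τκ, and consequently Z(x, y, τ) ≥ 0. -/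
open Matrix

/-! The linear part of (rHSD), `(x, y, τ) ↦ (cτ - Aᵀy, Ax - bτ, bᵀy - cᵀx)`, is skew-symmetric, so its
quadratic form vanishes. Pairing the slacks `(s, 0, κ)` with `(x, y, τ)` therefore leaves only the
regularization terms, which is the objective `Z`; and `xᵀs + τκ ≥ 0` by sign constraints. -/

section SkewEmbedding

variable {R : Type*} [CommRing R] {ι ι' : Type*} [Fintype ι] [Fintype ι']

theorem hsd_skew_form_eq_zero (A : Matrix ι' ι R) (b : ι' → R) (c : ι → R) (x : ι → R) (y : ι' → R)
    (τ : R) :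
    x ⬝ᵥ (τ • c - Aᵀ *ᵥ y) + y ⬝ᵥ (A *ᵥ x - τ • b) + τ * (b ⬝ᵥ y - c ⬝ᵥ x) = 0 := by
  simp only [dotProduct_sub, dotProduct_smul, smul_eq_mul, dotProduct_mulVec, vecMul_transpose]
  rw [dotProduct_comm (A *ᵥ x), dotProduct_mulVec, dotProduct_comm c, dotProduct_comm b]
  ring

theorem rhsd_objective_eq_compl_gap {A : Matrix ι' ι R} {b : ι' → R} {c : ι → R} {ρp ρd ρg : R}
    {xb x s : ι → R} {yb y : ι' → R} {τb τ κ : R}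
    (hs : s = τ • c - Aᵀ *ᵥ y + ρp • (x - xb)) (hd : A *ᵥ x - τ • b + ρd • (y - yb) = 0)
    (hκ : κ = b ⬝ᵥ y - c ⬝ᵥ x + ρg * (τ - τb)) :
    ρp * ((x - xb) ⬝ᵥ x) + ρd * ((y - yb) ⬝ᵥ y) + ρg * (τ - τb) * τ = x ⬝ᵥ s + τ * κ := by
  have hy : y ⬝ᵥ (A *ᵥ x - τ • b) = -(ρd * ((y - yb) ⬝ᵥ y)) := by
    rw [eq_neg_of_add_eq_zero_left hd, dotProduct_neg, dotProduct_smul, smul_eq_mul,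
      dotProduct_comm]
  rw [hs, hκ, dotProduct_add, dotProduct_smul, smul_eq_mul, dotProduct_comm x (x - xb)]
  linear_combination hy - hsd_skew_form_eq_zero A b c x y τ

end SkewEmbedding

theorem rhsd_obj_eq_compl_gap_general {m n : ℕ} (A : Matrix (Fin m) (Fin n) ℝ)
    (b : Fin m → ℝ) (c : Fin n → ℝ) (ρp ρd ρg : ℝ)
    (xb : Fin n → ℝ) (yb : Fin m → ℝ) (τb : ℝ)
    (x : Fin n → ℝ) (y : Fin m → ℝ) (s : Fin n → ℝ) (τ κ : ℝ)
    (hfeas : rhsdFeasible A b c ρp ρd ρg xb yb τb x y s τ κ) :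
    ρp * ((x - xb) ⬝ᵥ x) + ρd * ((y - yb) ⬝ᵥ y) + ρg * (τ - τb) * τ = x ⬝ᵥ s + τ * κ ∧
    0 ≤ ρp * ((x - xb) ⬝ᵥ x) + ρd * ((y - yb) ⬝ᵥ y) + ρg * (τ - τb) * τ := by
  obtain ⟨hs, hd, hκ, hx, hs_nonneg, hτ, hκ_nonneg⟩ := hfeas
  have hZ := rhsd_objective_eq_compl_gap hs hd hκ
  exact ⟨hZ, hZ ▸ add_nonneg (dotProduct_nonneg_of_nonneg hx hs_nonneg) (mul_nonneg hτ hκ_nonneg)⟩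

/-- Any (rHSD)-feasible point has objective value `xᵀs + τκ`, hence nonnegative objective. -/
theorem rhsd_obj_eq_compl_gap {m n : ℕ} (A : Matrix (Fin m) (Fin n) ℝ)
    (b : Fin m → ℝ) (c : Fin n → ℝ) (ρp ρd ρg : ℝ)
    (hρp : 0 < ρp) (hρd : 0 < ρd) (hρg : 0 < ρg)
    (xb : Fin n → ℝ) (yb : Fin m → ℝ) (τb : ℝ)
    (x : Fin n → ℝ) (y : Fin m → ℝ) (s : Fin n → ℝ) (τ κ : ℝ)
    (hfeas : rhsdFeasible A b c ρp ρd ρg xb yb τb x y s τ κ) :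
    ρp * ((x - xb) ⬝ᵥ x) + ρd * ((y - yb) ⬝ᵥ y) + ρg * (τ - τb) * τ = x ⬝ᵥ s + τ * κ ∧
    0 ≤ ρp * ((x - xb) ⬝ᵥ x) + ρd * ((y - yb) ⬝ᵥ y) + ρg * (τ - τb) * τ :=
  rhsd_obj_eq_compl_gap_general A b c ρp ρd ρg xb yb τb x y s τ κ hfeas
end

section
/- Let A be a real m×n matrix, b ∈ ℝ^m, c ∈ ℝ^n. Suppose (x*, y*, s*, τ*, κ*) is feasible for the homogeneous self-dual embedding (HSD) with τ* > 0. Then x*/τ* is feasible for the primal LP (P), (y*/τ*, s*/τ*) is feasible for the dual LP (D), and cᵀ(x*/τ*) = bᵀ(y*/τ*). Consequently, x*/τ* is optimal for (P), i.e. cᵀ(x*/τ*) ≤ cᵀx for every x ∈ ℝ^n with Ax = b and x ≥ 0, and (y*/τ*, s*/τ*) is optimal for (D), i.e. bᵀy ≤ bᵀ(y*/τ*) for every (y, s) with Aᵀy + s = c and s ≥ 0. -/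
/-!
Dividing an HSD-feasible point by `τ* > 0` turns its equality constraints into primal and dual
feasibility. The sign condition `κ* ≥ 0` says that the duality gap `cᵀx − bᵀy` of the scaled pair
is at most zero, while weak duality says it is at least zero; so the gap vanishes, and weak
duality against the scaled pair then gives optimality on both sides.
-/

open Matrix

section LinearProgramming

variable {R ι κ : Type*} [CommRing R] [Fintype ι] [Fintype κ]

theorem dotProduct_sub_dotProduct_eq_of_feasible {A : Matrix κ ι R} {b : κ → R} {c : ι → R}
    {x : ι → R} {y : κ → R} {s : ι → R} (hAx : A *ᵥ x = b) (hAy : Aᵀ *ᵥ y + s = c) :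
    c ⬝ᵥ x - b ⬝ᵥ y = s ⬝ᵥ x := by
  rw [← hAx, ← hAy, add_dotProduct, mulVec_transpose, ← dotProduct_mulVec, dotProduct_comm y,
    add_sub_cancel_left]

variable [LinearOrder R] [IsStrictOrderedRing R]

def PrimalFeasible (A : Matrix κ ι R) (b : κ → R) (x : ι → R) : Prop :=
  A *ᵥ x = b ∧ ∀ j, 0 ≤ x j

def DualFeasible (A : Matrix κ ι R) (c : ι → R) (y : κ → R) (s : ι → R) : Prop :=
  Aᵀ *ᵥ y + s = c ∧ ∀ j, 0 ≤ s j

theorem weak_duality {A : Matrix κ ι R} {b : κ → R} {c : ι → R} {x : ι → R} {y : κ → R}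
    {s : ι → R} (hx : PrimalFeasible A b x) (hys : DualFeasible A c y s) :
    b ⬝ᵥ y ≤ c ⬝ᵥ x := by
  have hgap := dotProduct_sub_dotProduct_eq_of_feasible hx.1 hys.1
  have hsx : 0 ≤ s ⬝ᵥ x := Finset.sum_nonneg fun j _ => mul_nonneg (hys.2 j) (hx.2 j)
  linarith

end LinearProgramming

section HomogeneousSelfDual

variable {m n : ℕ} {A : Matrix (Fin m) (Fin n) ℝ} {b : Fin m → ℝ} {c : Fin n → ℝ}
  {x : Fin n → ℝ} {y : Fin m → ℝ} {s : Fin n → ℝ} {τ κ : ℝ}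

theorem hsdFeasible.primalFeasible_inv_smul (h : hsdFeasible A b c x y s τ κ) (hτ : 0 < τ) :
    PrimalFeasible A b (τ⁻¹ • x) :=
  ⟨by rw [mulVec_smul, h.2.1, inv_smul_smul₀ hτ.ne'],
    fun j => mul_nonneg (inv_nonneg.2 hτ.le) (h.2.2.2.1 j)⟩

theorem hsdFeasible.dualFeasible_inv_smul (h : hsdFeasible A b c x y s τ κ) (hτ : 0 < τ) :
    DualFeasible A c (τ⁻¹ • y) (τ⁻¹ • s) :=
  ⟨by rw [mulVec_smul, h.1, smul_sub, inv_smul_smul₀ hτ.ne', add_sub_cancel],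
    fun j => mul_nonneg (inv_nonneg.2 hτ.le) (h.2.2.2.2.1 j)⟩

theorem hsdFeasible.dotProduct_inv_smul_le (h : hsdFeasible A b c x y s τ κ) (hτ : 0 < τ) :
    c ⬝ᵥ (τ⁻¹ • x) ≤ b ⬝ᵥ (τ⁻¹ • y) := by
  have hκ : c ⬝ᵥ x ≤ b ⬝ᵥ y := sub_nonneg.1 (h.2.2.1 ▸ h.2.2.2.2.2.2)
  simpa only [dotProduct_smul, smul_eq_mul] using
    mul_le_mul_of_nonneg_left hκ (inv_nonneg.2 hτ.le)

end HomogeneousSelfDual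

/-- From an (HSD)-feasible point with τ* > 0 one recovers a primal-dual optimal pair
for the original LP by scaling with 1/τ*. -/
theorem hsd_pos_tau_gives_optimal {m n : ℕ} (A : Matrix (Fin m) (Fin n) ℝ)
    (b : Fin m → ℝ) (c : Fin n → ℝ)
    (xs : Fin n → ℝ) (ys : Fin m → ℝ) (ss : Fin n → ℝ) (τs κs : ℝ)
    (hfeas : hsdFeasible A b c xs ys ss τs κs) (hτ : 0 < τs) :
    -- x*/τ* is primal feasible
    (A.mulVec (τs⁻¹ • xs) = b ∧ (∀ j, 0 ≤ (τs⁻¹ • xs) j)) ∧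
    -- (y*/τ*, s*/τ*) is dual feasible
    (Aᵀ.mulVec (τs⁻¹ • ys) + τs⁻¹ • ss = c ∧ (∀ j, 0 ≤ (τs⁻¹ • ss) j)) ∧
    -- equal objectives
    c ⬝ᵥ (τs⁻¹ • xs) = b ⬝ᵥ (τs⁻¹ • ys) ∧
    -- primal optimality
    (∀ x : Fin n → ℝ, A.mulVec x = b → (∀ j, 0 ≤ x j) → c ⬝ᵥ (τs⁻¹ • xs) ≤ c ⬝ᵥ x) ∧
    -- dual optimality
    (∀ (y : Fin m → ℝ) (s : Fin n → ℝ), Aᵀ.mulVec y + s = c → (∀ j, 0 ≤ s j) →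
      b ⬝ᵥ y ≤ b ⬝ᵥ (τs⁻¹ • ys)) := by
  have hP := hfeas.primalFeasible_inv_smul hτ
  have hD := hfeas.dualFeasible_inv_smul hτ
  have hgap := hfeas.dotProduct_inv_smul_le hτ
  exact ⟨hP, hD, hgap.antisymm (weak_duality hP hD),
    fun x hAx hx => hgap.trans (weak_duality ⟨hAx, hx⟩ hD),
    fun y s hAy hs => (weak_duality hP ⟨hAy, hs⟩).trans hgap⟩
end
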